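/- arXiv:cs/0404021 — 7 statements merged into one kernel-verified Lean document; each statement's English description precedes it below -/
import Mathlib

section
/- Let f : X → X be a continuous map on a compact Hausdorff space X and let V ⊆ X be a clopen set. Then the topological boundary of the basin B(V) = ⋃_{n≥0} f^{-n}(V) is invariant under f, i.e., f(∂B(V)) ⊆ ∂B(V). -/
open Set

/-- A point of `frontier B` lies outside the open set `B`, hence outside `V`; near it `B` agrees
with `f ⁻¹' B` because `Vᶜ` is open, so its image is in `closure B` but not in `B`. -/
theorem mapsTo_frontier_of_eq_union_preimage {X : Type*} [TopologicalSpace X] {f : X → X}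
    (hf : Continuous f) {V B : Set X} (hV : IsClosed V) (hB : IsOpen B)
    (hBV : B = V ∪ f ⁻¹' B) : MapsTo f (frontier B) (frontier B) := by
  intro x hx
  rw [hB.frontier_eq] at hx ⊢
  obtain ⟨hx_closure, hx_notMem⟩ := hx
  have hx_notMem_V : x ∉ V := fun h => hx_notMem (hBV ▸ Or.inl h)
  have hBV_compl : Vᶜ ∩ B ⊆ f ⁻¹' B := fun y ⟨hyV, hyB⟩ =>
    ((hBV ▸ hyB : y ∈ V ∪ f ⁻¹' B)).resolve_left hyV
  have hx_closure_pre : x ∈ closure (f ⁻¹' B) :=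
    closure_mono hBV_compl (hV.isOpen_compl.inter_closure ⟨hx_notMem_V, hx_closure⟩)
  exact ⟨hf.closure_preimage_subset B hx_closure_pre,
    fun h => hx_notMem (hBV ▸ Or.inr h)⟩

def basin {X : Type*} (f : X → X) (V : Set X) : Set X :=
  ⋃ n : ℕ, f^[n] ⁻¹' V

theorem basin_eq_union_preimage {X : Type*} (f : X → X) (V : Set X) :
    basin f V = V ∪ f ⁻¹' basin f V := by
  simp only [basin, preimage_iUnion, ← preimage_comp, ← Function.iterate_succ]
  exact (union_iUnion_nat_succ fun n => f^[n] ⁻¹' V).symm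

theorem isOpen_basin {X : Type*} [TopologicalSpace X] {f : X → X} (hf : Continuous f)
    {V : Set X} (hV : IsOpen V) : IsOpen (basin f V) :=
  isOpen_iUnion fun n => hV.preimage (hf.iterate n)

theorem frontier_basin_invariant_general (X : Type*) [TopologicalSpace X]
    (f : X → X) (hf : Continuous f) (V : Set X) (hV : IsClopen V) :
    f '' frontier (⋃ n : ℕ, f^[n] ⁻¹' V) ⊆ frontier (⋃ n : ℕ, f^[n] ⁻¹' V) :=
  (mapsTo_frontier_of_eq_union_preimage hf hV.isClosed (isOpen_basin hf hV.isOpen)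
    (basin_eq_union_preimage f V)).image_subset

/-- The topological boundary of the basin `B(V) = ⋃_{n ≥ 0} f⁻ⁿ(V)` of a clopen
set `V` is invariant under `f`. -/
theorem frontier_basin_invariant (X : Type*) [TopologicalSpace X] [CompactSpace X]
    [T2Space X] (f : X → X) (hf : Continuous f) (V : Set X) (hV : IsClopen V) :
    f '' frontier (⋃ n : ℕ, f^[n] ⁻¹' V) ⊆ frontier (⋃ n : ℕ, f^[n] ⁻¹' V) :=
  frontier_basin_invariant_general X f hf V hV
end

section
/- An equicontinuous continuous map on a compact metric space has clopen basins: for every clopen set V, the set B(V) = ⋃_{n≥0} f^{-n}(V) is clopen. -/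
/-- `V` contains a uniform neighbourhood of itself (Lebesgue number), so by equicontinuity a point
all of whose images avoid `V` has a neighbourhood with the same property. -/
theorem Equicontinuous.isClopen_iUnion_preimage {ι X α : Type*} [TopologicalSpace X]
    [UniformSpace α] {F : ι → X → α} (hF : Equicontinuous F) {V : Set α} (hVc : IsCompact V)
    (hVo : IsOpen V) : IsClopen (⋃ i, F i ⁻¹' V) := by
  refine ⟨?_, isOpen_iUnion fun i => hVo.preimage (hF.continuous i)⟩
  obtain ⟨U, hU, -, hUV⟩ := lebesgue_number_of_compact_open hVc hVo subset_rfl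
  refine isOpen_compl_iff.1 (isOpen_iff_mem_nhds.2 fun x hx => ?_)
  filter_upwards [hF x _ (symm_le_uniformity hU)] with y hy
  simp only [Set.mem_compl_iff, Set.mem_iUnion, Set.mem_preimage, not_exists] at hx ⊢
  exact fun i hi => hx i (hUV _ hi (hy i))

theorem equicontinuous_clopen_basins_general (X : Type*) [MetricSpace X] [CompactSpace X]
    (f : X → X)
    (heq : ∀ ε > (0 : ℝ), ∃ δ > (0 : ℝ), ∀ x y : X, dist x y < δ →
      ∀ t : ℕ, dist (f^[t] x) (f^[t] y) < ε)
    (V : Set X) (hV : IsClopen V) :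
    IsClopen (⋃ n : ℕ, f^[n] ⁻¹' V) :=
  (Metric.uniformEquicontinuous_iff.2 heq).equicontinuous.isClopen_iUnion_preimage
    hV.isClosed.isCompact hV.isOpen

/-- An equicontinuous continuous map on a compact symbolic space (clopen sets
form a basis) has clopen basins. -/
theorem equicontinuous_clopen_basins (X : Type*) [MetricSpace X] [CompactSpace X]
    (hbasis : TopologicalSpace.IsTopologicalBasis {s : Set X | IsClopen s})
    (f : X → X) (hf : Continuous f)
    (heq : ∀ ε > (0 : ℝ), ∃ δ > (0 : ℝ), ∀ x y : X, dist x y < δ →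
      ∀ t : ℕ, dist (f^[t] x) (f^[t] y) < ε)
    (V : Set X) (hV : IsClopen V) :
    IsClopen (⋃ n : ℕ, f^[n] ⁻¹' V) :=
  equicontinuous_clopen_basins_general X f heq V hV
end

section
/- Let f : X → X be an equicontinuous continuous self-map of a compact ultrametric space (d(x,z) ≤ max(d(x,y), d(y,z))). Then f has the shadowing property: for every ε > 0 there is δ > 0 such that every δ-pseudo-orbit is ε-shadowed by some point. -/
/-! Take the starting point of the pseudo-orbit as the shadowing point. Equicontinuity makes each
jump of the pseudo-orbit stay ε-small along all forward iterates, and the ultrametric inequality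
keeps the accumulated error below ε instead of adding the jumps up. -/

namespace IsUltrametricDist

variable {X : Type*} [PseudoMetricSpace X] [IsUltrametricDist X]

theorem dist_iterate_lt_of_pseudoOrbit {f : X → X} {ε δ : ℝ} (hε : 0 < ε)
    (hδ : ∀ a b : X, dist a b < δ → ∀ t : ℕ, dist (f^[t] a) (f^[t] b) < ε)
    {x : ℕ → X} (hx : ∀ n : ℕ, dist (f (x n)) (x (n + 1)) < δ) (n t : ℕ) :
    dist (f^[t] (f^[n] (x 0))) (f^[t] (x n)) < ε := by
  induction n generalizing t with
  | zero => simpa using hε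
  | succ n ih =>
    have h_orbit : dist (f^[t] (f^[n + 1] (x 0))) (f^[t] (f (x n))) < ε := by
      rw [Function.iterate_succ_apply' f n (x 0)]
      simpa only [Function.iterate_succ_apply] using ih (t + 1)
    calc dist (f^[t] (f^[n + 1] (x 0))) (f^[t] (x (n + 1)))
        ≤ max (dist (f^[t] (f^[n + 1] (x 0))) (f^[t] (f (x n))))
            (dist (f^[t] (f (x n))) (f^[t] (x (n + 1)))) := dist_triangle_max _ _ _
      _ < ε := max_lt h_orbit (hδ _ _ (hx n) t)

end IsUltrametricDist

theorem equicontinuous_shadowing_general (X : Type*) [MetricSpace X]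
    (hultra : ∀ x y z : X, dist x z ≤ max (dist x y) (dist y z))
    (f : X → X)
    (heq : ∀ ε > (0 : ℝ), ∃ δ > (0 : ℝ), ∀ x y : X, dist x y < δ →
      ∀ t : ℕ, dist (f^[t] x) (f^[t] y) < ε) :
    ∀ ε > (0 : ℝ), ∃ δ > (0 : ℝ), ∀ x : ℕ → X,
      (∀ n : ℕ, dist (f (x n)) (x (n + 1)) < δ) →
      ∃ y : X, ∀ n : ℕ, dist (f^[n] y) (x n) < ε := by
  have : IsUltrametricDist X := ⟨hultra⟩
  intro ε hε
  obtain ⟨δ, hδ, hδε⟩ := heq ε hε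
  exact ⟨δ, hδ, fun x hx => ⟨x 0, fun n =>
    IsUltrametricDist.dist_iterate_lt_of_pseudoOrbit hε hδε hx n 0⟩⟩

/-- An equicontinuous continuous self-map of a compact ultrametric space has the
shadowing property. -/
theorem equicontinuous_shadowing (X : Type*) [MetricSpace X] [CompactSpace X]
    (hultra : ∀ x y z : X, dist x z ≤ max (dist x y) (dist y z))
    (f : X → X) (hf : Continuous f)
    (heq : ∀ ε > (0 : ℝ), ∃ δ > (0 : ℝ), ∀ x y : X, dist x y < δ →
      ∀ t : ℕ, dist (f^[t] x) (f^[t] y) < ε) :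
    ∀ ε > (0 : ℝ), ∃ δ > (0 : ℝ), ∀ x : ℕ → X,
      (∀ n : ℕ, dist (f (x n)) (x (n + 1)) < δ) →
      ∃ y : X, ∀ n : ℕ, dist (f^[n] y) (x n) < ε :=
  equicontinuous_shadowing_general X hultra f heq
end

section
/- In the proof that equicontinuous ultrametric systems satisfy shadowing: if f : X → X is a map on an ultrametric space and δ > 0 is such that d(x,y) < δ implies d(f^t(x), f^t(y)) < ε for all t, then for any δ-pseudo-orbit (x_m), one has d(f^n(x_m), f^{n+m}(x_0)) < ε for all m, n ≥ 0; in particular x_0 ε-shadows the pseudo-orbit. -/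
/-!
Induction on `m`: `fⁿ(x_{m+1})` is `ε`-close to `fⁿ⁺¹(x_m)` because `x_{m+1}` is `δ`-close to
`f(x_m)`, and `fⁿ⁺¹(x_m)` is `ε`-close to `fⁿ⁺¹⁺ᵐ(x_0)` by induction. The ultrametric inequality
combines the two bounds without loss, so the error does not accumulate along the pseudo-orbit.
-/

theorem IsUltrametricDist.dist_iterate_pseudoOrbit_lt {X : Type*} [PseudoMetricSpace X]
    [IsUltrametricDist X] {f : X → X} {ε δ : ℝ} (hε : 0 < ε)
    (hcontr : ∀ x y : X, dist x y < δ → ∀ t : ℕ, dist (f^[t] x) (f^[t] y) < ε)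
    {x : ℕ → X} (hpo : ∀ m : ℕ, dist (f (x m)) (x (m + 1)) < δ) (m n : ℕ) :
    dist (f^[n] (x m)) (f^[n + m] (x 0)) < ε := by
  induction m generalizing n with
  | zero => simpa using hε
  | succ m ih =>
    have step : dist (f^[n] (x (m + 1))) (f^[n + 1] (x m)) < ε := by
      rw [Function.iterate_succ_apply]
      exact hcontr _ _ (dist_comm (f (x m)) _ ▸ hpo m) n
    have tail : dist (f^[n + 1] (x m)) (f^[n + (m + 1)] (x 0)) < ε := by
      simpa only [Nat.add_right_comm n 1 m, Nat.add_assoc] using ih (n + 1)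
    exact (dist_triangle_max _ _ _).trans_lt (max_lt step tail)

theorem pseudo_orbit_shadowed_by_initial_point_general (X : Type*) [MetricSpace X]
    (hultra : ∀ x y z : X, dist x z ≤ max (dist x y) (dist y z))
    (f : X → X) (ε δ : ℝ) (hε : 0 < ε)
    (hcontr : ∀ x y : X, dist x y < δ → ∀ t : ℕ, dist (f^[t] x) (f^[t] y) < ε)
    (x : ℕ → X) (hpo : ∀ m : ℕ, dist (f (x m)) (x (m + 1)) < δ) :
    (∀ m n : ℕ, dist (f^[n] (x m)) (f^[n + m] (x 0)) < ε) ∧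
      ∀ n : ℕ, dist (f^[n] (x 0)) (x n) < ε := by
  have : IsUltrametricDist X := ⟨hultra⟩
  have orbit_close := IsUltrametricDist.dist_iterate_pseudoOrbit_lt hε hcontr hpo
  refine ⟨orbit_close, fun n => ?_⟩
  simpa [dist_comm] using orbit_close n 0

/-- In an ultrametric space, if `δ`-close points have `ε`-close orbits and
`δ ≤ ε`, then for any `δ`-pseudo-orbit `(x_m)` one has
`d(fⁿ(x_m), f^{n+m}(x_0)) < ε` for all `m, n`; in particular `x_0`
`ε`-shadows the pseudo-orbit. -/
theorem pseudo_orbit_shadowed_by_initial_point (X : Type*) [MetricSpace X]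
    (hultra : ∀ x y z : X, dist x z ≤ max (dist x y) (dist y z))
    (f : X → X) (ε δ : ℝ) (hε : 0 < ε) (hδ : 0 < δ) (hδε : δ ≤ ε)
    (hcontr : ∀ x y : X, dist x y < δ → ∀ t : ℕ, dist (f^[t] x) (f^[t] y) < ε)
    (x : ℕ → X) (hpo : ∀ m : ℕ, dist (f (x m)) (x (m + 1)) < δ) :
    (∀ m n : ℕ, dist (f^[n] (x m)) (f^[n + m] (x 0)) < ε) ∧
      ∀ n : ℕ, dist (f^[n] (x 0)) (x n) < ε :=
  pseudo_orbit_shadowed_by_initial_point_general X hultra f ε δ hε hcontr x hpo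
end

section
/- Let f : X → X be a continuous map on a compact symbolic space such that every nonempty closed f-invariant subset has nonempty interior. Then f has only finitely many minimal subsystems, and there exists m ∈ ℕ such that every point of X enters the union of the minimal subsystems within m steps; consequently the limit set ⋂_{n≥0} f^n(X) equals the union of the minimal subsystems. -/
/-!
Every orbit closure contains a minimal subsystem, whose interior is nonempty and open, so every
orbit enters the interior of some minimal subsystem. By compactness finitely many of the open sets
`f^[n] ⁻¹' interior Y` cover `X`; this bounds the entry time, and since distinct minimal subsystems
are disjoint, any minimal subsystem meets, hence equals, one of the finitely many `Y`. Finally a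
set `s` with `f '' s = s` that every point enters within `m` steps is exactly the limit set: it
contains `f^[m] '' univ` and is contained in every `f^[n] '' univ`.
-/

def IsMinimalSubsystem {X : Type*} [TopologicalSpace X] (f : X → X) (Y : Set X) : Prop :=
  Y.Nonempty ∧ IsClosed Y ∧ f '' Y ⊆ Y ∧
    ∀ Z ⊆ Y, Z.Nonempty → IsClosed Z → f '' Z ⊆ Z → Z = Y

open Set

theorem Set.iInter_iterate_image_univ_eq {α : Type*} {f : α → α} {s : Set α}
    (hs : f '' s = s) {m : ℕ} (hm : ∀ x, ∃ n ≤ m, f^[n] x ∈ s) :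
    ⋂ n : ℕ, f^[n] '' univ = s := by
  have hmaps : MapsTo f s s := mapsTo_iff_image_subset.2 hs.subset
  refine Subset.antisymm (fun x hx => ?_) (subset_iInter fun n => ?_)
  · obtain ⟨y, -, rfl⟩ := mem_iInter.1 hx m
    obtain ⟨n, hnm, hn⟩ := hm y
    rw [← Nat.sub_add_cancel hnm, Function.iterate_add_apply]
    exact hmaps.iterate (m - n) hn
  · calc s = f^[n] '' s := by rw [image_iterate_eq, Function.iterate_fixed hs]
      _ ⊆ f^[n] '' univ := image_mono (subset_univ s)

namespace IsMinimalSubsystem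

variable {X : Type*} [TopologicalSpace X] {f : X → X} {Y Z : Set X}

theorem eq_of_inter_nonempty (hY : IsMinimalSubsystem f Y) (hZ : IsMinimalSubsystem f Z)
    (h : (Y ∩ Z).Nonempty) : Y = Z := by
  have hinv : f '' (Y ∩ Z) ⊆ Y ∩ Z :=
    (image_inter_subset f Y Z).trans (inter_subset_inter hY.2.2.1 hZ.2.2.1)
  have hclosed : IsClosed (Y ∩ Z) := hY.2.1.inter hZ.2.1
  rw [← hY.2.2.2 _ inter_subset_left h hclosed hinv, hZ.2.2.2 _ inter_subset_right h hclosed hinv]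

theorem mem_of_forall_exists_iterate_mem {𝒮 : Set (Set X)}
    (h𝒮 : ∀ Z ∈ 𝒮, IsMinimalSubsystem f Z) (hcover : ∀ x, ∃ n, f^[n] x ∈ ⋃₀ 𝒮)
    (hY : IsMinimalSubsystem f Y) : Y ∈ 𝒮 := by
  obtain ⟨y, hy⟩ := hY.1
  obtain ⟨n, Z, hZ, hyZ⟩ := hcover y
  have hyY : f^[n] y ∈ Y := (mapsTo_iff_image_subset.2 hY.2.2.1).iterate n hy
  rwa [hY.eq_of_inter_nonempty (h𝒮 Z hZ) ⟨_, hyY, hyZ⟩]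

theorem image_eq [CompactSpace X] [T2Space X] (hf : Continuous f)
    (hY : IsMinimalSubsystem f Y) : f '' Y = Y :=
  hY.2.2.2 _ hY.2.2.1 (hY.1.image f) (hY.2.1.isCompact.image hf).isClosed
    (image_mono hY.2.2.1)

end IsMinimalSubsystem

section CompactSpace

variable {X : Type*} [TopologicalSpace X] [CompactSpace X] {f : X → X}

theorem exists_isMinimalSubsystem_subset {A : Set X} (hne : A.Nonempty) (hA : IsClosed A)
    (hinv : f '' A ⊆ A) : ∃ Y ⊆ A, IsMinimalSubsystem f Y := by
  let S : Set (Set X) := {Z | Z.Nonempty ∧ IsClosed Z ∧ f '' Z ⊆ Z}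
  have hchain : ∀ c ⊆ S, IsChain (· ⊆ ·) c → c.Nonempty → ∃ lb ∈ S, ∀ Z ∈ c, lb ⊆ Z := by
    intro c hcS hc hcne
    have : Nonempty c := hcne.to_subtype
    refine ⟨⋂₀ c, ⟨?_, isClosed_sInter fun Z hZ => (hcS hZ).2.1, ?_⟩,
      fun Z hZ => sInter_subset_of_mem hZ⟩
    · refine IsCompact.nonempty_sInter_of_directed_nonempty_isCompact_isClosed
        (fun Z hZ Z' hZ' => ?_) (fun Z hZ => (hcS hZ).1) (fun Z hZ => (hcS hZ).2.1.isCompact) (fun Z hZ => (hcS hZ).2.1)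
      rcases hc.total hZ hZ' with h | h
      exacts [⟨Z, hZ, subset_rfl, h⟩, ⟨Z', hZ', h, subset_rfl⟩]
    · exact (image_sInter_subset c f).trans
        (subset_sInter fun Z hZ => (biInter_subset_of_mem hZ).trans (hcS hZ).2.2)
  obtain ⟨Y, hYA, hY⟩ := zorn_superset_nonempty S hchain A ⟨hne, hA, hinv⟩
  exact ⟨Y, hYA, hY.1.1, hY.1.2.1, hY.1.2.2,
    fun Z hZY hZne hZ hZinv => hZY.antisymm (hY.2 ⟨hZne, hZ, hZinv⟩ hZY)⟩

variable (hf : Continuous f)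
  (hsub : ∀ Y : Set X, Y.Nonempty → IsClosed Y → f '' Y ⊆ Y → (interior Y).Nonempty)
include hf hsub

theorem exists_iterate_mem_interior_isMinimalSubsystem (x : X) :
    ∃ n : ℕ, ∃ Y, IsMinimalSubsystem f Y ∧ f^[n] x ∈ interior Y := by
  let C := closure (range fun n => f^[n] x)
  have hinv : f '' C ⊆ C := by
    refine (image_closure_subset_closure_image hf).trans (closure_mono ?_)
    rintro _ ⟨_, ⟨n, rfl⟩, rfl⟩
    exact ⟨n + 1, Function.iterate_succ_apply' f n x⟩
  obtain ⟨Y, hYC, hY⟩ :=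
    exists_isMinimalSubsystem_subset (range_nonempty _).closure isClosed_closure hinv
  obtain ⟨z, hz⟩ := hsub Y hY.1 hY.2.1 hY.2.2.1
  obtain ⟨_, hmem, n, rfl⟩ := mem_closure_iff.1 (hYC (interior_subset hz)) _ isOpen_interior hz
  exact ⟨n, Y, hY, hmem⟩

theorem exists_finite_isMinimalSubsystem_bounded_entry :
    ∃ 𝒮 : Set (Set X), 𝒮.Finite ∧ (∀ Y ∈ 𝒮, IsMinimalSubsystem f Y) ∧
      ∃ m : ℕ, ∀ x, ∃ n ≤ m, f^[n] x ∈ ⋃₀ 𝒮 := by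
  obtain ⟨b, hb, hbfin, hcover⟩ := isCompact_univ.elim_finite_subcover_image
    (b := {i : ℕ × Set X | IsMinimalSubsystem f i.2}) (c := fun i => f^[i.1] ⁻¹' interior i.2)
    (fun i _ => isOpen_interior.preimage (hf.iterate i.1)) fun x _ => by
      obtain ⟨n, Y, hY, hx⟩ := exists_iterate_mem_interior_isMinimalSubsystem hf hsub x
      exact mem_biUnion (x := (n, Y)) hY hx
  obtain ⟨m, hm⟩ := (hbfin.image Prod.fst).bddAbove
  refine ⟨Prod.snd '' b, hbfin.image _, forall_mem_image.2 fun i hi => hb hi, m, fun x => ?_⟩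
  obtain ⟨i, hi, hx⟩ := mem_iUnion₂.1 (hcover (mem_univ x))
  exact ⟨i.1, hm (mem_image_of_mem _ hi), i.2, mem_image_of_mem _ hi, interior_subset hx⟩

end CompactSpace

theorem limit_set_of_subsystems_nonempty_interior_general (X : Type*) [MetricSpace X]
    [CompactSpace X]
    (f : X → X) (hf : Continuous f)
    (hsub : ∀ Y : Set X, Y.Nonempty → IsClosed Y → f '' Y ⊆ Y →
      (interior Y).Nonempty) :
    {Y : Set X | IsMinimalSubsystem f Y}.Finite ∧
      (∃ m : ℕ, ∀ x : X, ∃ n ≤ m, f^[n] x ∈ ⋃₀ {Y : Set X | IsMinimalSubsystem f Y}) ∧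
      (⋂ n : ℕ, f^[n] '' Set.univ) = ⋃₀ {Y : Set X | IsMinimalSubsystem f Y} := by
  obtain ⟨𝒮, h𝒮fin, h𝒮, m, hm⟩ := exists_finite_isMinimalSubsystem_bounded_entry hf hsub
  have h𝒮_eq : {Y : Set X | IsMinimalSubsystem f Y} = 𝒮 :=
    Subset.antisymm (fun Y hY => hY.mem_of_forall_exists_iterate_mem h𝒮 fun x =>
      (hm x).imp fun _ => And.right) h𝒮
  have himage : f '' ⋃₀ 𝒮 = ⋃₀ 𝒮 := by
    rw [image_sUnion, image_congr fun Y hY => (h𝒮 Y hY).image_eq hf, image_id']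
  rw [h𝒮_eq]
  exact ⟨h𝒮fin, ⟨m, hm⟩, iInter_iterate_image_univ_eq himage hm⟩

/-- If every nonempty closed invariant subset has nonempty interior, then there
are finitely many minimal subsystems, every point enters their union in a
bounded number of steps, and the limit set equals the union of the minimal
subsystems. -/
theorem limit_set_of_subsystems_nonempty_interior (X : Type*) [MetricSpace X]
    [CompactSpace X]
    (hbasis : TopologicalSpace.IsTopologicalBasis {s : Set X | IsClopen s})
    (f : X → X) (hf : Continuous f)
    (hsub : ∀ Y : Set X, Y.Nonempty → IsClosed Y → f '' Y ⊆ Y →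
      (interior Y).Nonempty) :
    {Y : Set X | IsMinimalSubsystem f Y}.Finite ∧
      (∃ m : ℕ, ∀ x : X, ∃ n ≤ m, f^[n] x ∈ ⋃₀ {Y : Set X | IsMinimalSubsystem f Y}) ∧
      (⋂ n : ℕ, f^[n] '' Set.univ) = ⋃₀ {Y : Set X | IsMinimalSubsystem f Y} :=
  limit_set_of_subsystems_nonempty_interior_general X f hf hsub
end

section
/- A Devaney-chaotic dynamical system on an infinite compact metric space is sensitive at every point: there exists ε > 0 such that for every x and every δ > 0 there exist y with d(x,y) < δ and t ∈ ℕ with d(f^t(x), f^t(y)) > ε. -/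
/-!
Fix two periodic points whose orbits are disjoint; being finite, the orbits are at some distance
`8ε` apart, so every `x` is `4ε`-far from the whole orbit of one of them, say `p`. Near `x` pick a
periodic point `q`, of period `m`, and, by transitivity, a point `z` that later follows the first
`m` steps of the orbit of `p` up to `ε`. At a multiple `T` of `m` falling in that window,
`f^[T] q = q` is `ε`-close to `x` while `f^[T] z` is `ε`-close to the orbit of `p`, so `f^[T] x`
is more than `ε` away from one of them.
-/

open Function Metric Set

theorem Dense.infinite {X : Type*} [TopologicalSpace X] [T1Space X] [Infinite X] {s : Set X}
    (hs : Dense s) : s.Infinite := fun hfin =>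
  infinite_univ (hs.closure_eq ▸ hfin.isClosed.closure_eq ▸ hfin)

theorem IsCompact.exists_pos_forall_lt_dist {X : Type*} [PseudoMetricSpace X] {s t : Set X}
    (hs : IsCompact s) (ht : IsClosed t) (hst : Disjoint s t) :
    ∃ r > (0 : ℝ), ∀ x ∈ s, ∀ y ∈ t, r < dist x y := by
  obtain ⟨r, hr, h⟩ := exists_pos_forall_lt_edist hs ht hst
  refine ⟨r, hr, fun x hx y hy => ?_⟩
  have := h x hx y hy
  rwa [edist_nndist, ENNReal.coe_lt_coe, ← NNReal.coe_lt_coe, coe_nndist] at this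

namespace Function

variable {α : Type*} {f : α → α} {x y : α} {n : ℕ}

theorem IsPeriodicPt.finite_range_iterate (hn : 0 < n) (hx : IsPeriodicPt f n x) :
    (range (f^[·] x)).Finite :=
  ((finite_Iio n).image (f^[·] x)).subset <| by
    rintro _ ⟨i, rfl⟩
    exact ⟨i % n, Nat.mod_lt i hn, hx.iterate_mod_apply i⟩

theorem mem_range_iterate_of_iterate_eq (hy : y ∈ periodicPts f) {i j : ℕ}
    (h : f^[i] x = f^[j] y) : y ∈ range (f^[·] x) := by
  obtain ⟨m, hm, hmy⟩ := hy
  have hj : j ≤ m * (j + 1) := by nlinarith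
  refine ⟨m * (j + 1) - j + i, ?_⟩
  change f^[_] x = y
  rw [iterate_add_apply, h, ← iterate_add_apply, Nat.sub_add_cancel hj]
  exact hmy.mul_const _

theorem disjoint_range_iterate (hy : y ∈ periodicPts f) (hxy : y ∉ range (f^[·] x)) :
    Disjoint (range (f^[·] x)) (range (f^[·] y)) := by
  rw [Set.disjoint_left]
  rintro _ ⟨i, rfl⟩ ⟨j, hj⟩
  exact hxy (mem_range_iterate_of_iterate_eq hy hj.symm)

end Function

section Metric

variable {X : Type*} {f : X → X}

theorem exists_lt_dist_iterate_iterate [MetricSpace X] [Infinite X]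
    (hper : Dense (periodicPts f)) :
    ∃ p q : X, ∃ r > (0 : ℝ), ∀ i j, r < dist (f^[i] p) (f^[j] q) := by
  obtain ⟨p, n, hn, hpn⟩ := hper.infinite.nonempty
  have hp_fin := hpn.finite_range_iterate hn
  obtain ⟨q, hq, hqp⟩ := (hper.infinite.sdiff hp_fin).nonempty
  obtain ⟨m, hm, hqm⟩ := hq
  obtain ⟨r, hr, hsep⟩ := hp_fin.isCompact.exists_pos_forall_lt_dist
    (hqm.finite_range_iterate hm).isClosed (disjoint_range_iterate ⟨m, hm, hqm⟩ hqp)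
  exact ⟨p, q, r, hr, fun i j => hsep _ ⟨i, rfl⟩ _ ⟨j, rfl⟩⟩

theorem exists_forall_le_dist_iterate [MetricSpace X] [Infinite X]
    (hper : Dense (periodicPts f)) :
    ∃ ε > (0 : ℝ), ∀ x : X, ∃ p : X, ∀ i, 4 * ε ≤ dist x (f^[i] p) := by
  obtain ⟨p, q, r, hr, hsep⟩ := exists_lt_dist_iterate_iterate hper
  refine ⟨r / 8, by positivity, fun x => ?_⟩
  by_cases hp : ∀ i, 4 * (r / 8) ≤ dist x (f^[i] p)
  · exact ⟨p, hp⟩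
  obtain ⟨i, hi⟩ := not_forall.mp hp
  refine ⟨q, fun j => ?_⟩
  have := dist_triangle_left (f^[i] p) (f^[j] q) x
  linarith [hsep i j, not_le.mp hi]

variable [PseudoMetricSpace X]

theorem exists_iterate_mul_mem_ball (hf : Continuous f)
    (htrans : ∀ U V : Set X, IsOpen U → IsOpen V → U.Nonempty → V.Nonempty →
      ∃ n : ℕ, (f^[n] '' U ∩ V).Nonempty)
    {V : Set X} (hV : IsOpen V) (hV_ne : V.Nonempty) (p : X) {ε : ℝ} (hε : 0 < ε)
    {m : ℕ} (hm : 0 < m) :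
    ∃ z ∈ V, ∃ j i : ℕ, f^[m * j] z ∈ ball (f^[i] p) ε := by
  set U := ⋂ i ∈ Iic m, f^[i] ⁻¹' ball (f^[i] p) ε
  have hU : IsOpen U :=
    (finite_Iic m).isOpen_biInter fun i _ => isOpen_ball.preimage (hf.iterate i)
  have hpU : p ∈ U := mem_iInter₂.mpr fun i _ => mem_ball_self hε
  obtain ⟨k, _, ⟨z, hzV, rfl⟩, hkz⟩ := htrans V U hV hU hV_ne ⟨p, hpU⟩
  obtain ⟨i, hi, hik⟩ : ∃ i ≤ m, m * (k / m + 1) = i + k := by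
    have := Nat.div_add_mod k m
    have := Nat.mod_lt k hm
    exact ⟨m * (k / m + 1) - k, by rw [Nat.mul_succ]; omega, by rw [Nat.mul_succ]; omega⟩
  refine ⟨z, hzV, k / m + 1, i, ?_⟩
  rw [hik, iterate_add_apply]
  exact mem_iInter₂.mp hkz i hi

theorem lt_dist_or_lt_dist_of_four_mul_le_dist {a b c d : X} {ε : ℝ} (hab : dist a b < ε)
    (hcd : dist c d < ε) (had : 4 * ε ≤ dist a d) (e : X) : ε < dist e b ∨ ε < dist e c := by
  by_contra! h
  have := dist_triangle4 a b e c
  have := dist_triangle a c d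
  linarith [dist_comm b e]

theorem exists_lt_dist_iterate_of_forall_le_dist (hf : Continuous f)
    (htrans : ∀ U V : Set X, IsOpen U → IsOpen V → U.Nonempty → V.Nonempty →
      ∃ n : ℕ, (f^[n] '' U ∩ V).Nonempty)
    (hper : Dense (periodicPts f)) {x p : X} {ε δ : ℝ} (hε : 0 < ε) (hδ : 0 < δ)
    (hfar : ∀ i, 4 * ε ≤ dist x (f^[i] p)) :
    ∃ y, dist x y < δ ∧ ∃ t, ε < dist (f^[t] x) (f^[t] y) := by
  obtain ⟨q, ⟨m, hm, hqm⟩, hqx⟩ :=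
    hper.exists_mem_open isOpen_ball ⟨x, mem_ball_self (lt_min hδ hε)⟩
  rw [mem_ball', lt_min_iff] at hqx
  obtain ⟨z, hzx, j, i, hz⟩ :=
    exists_iterate_mul_mem_ball hf htrans isOpen_ball ⟨x, mem_ball_self hδ⟩ p hε hm
  rcases lt_dist_or_lt_dist_of_four_mul_le_dist hqx.2 hz (hfar i) (f^[m * j] x) with h | h
  · exact ⟨q, hqx.1, m * j, by rwa [(hqm.mul_const j).eq]⟩
  · exact ⟨z, mem_ball'.mp hzx, m * j, h⟩

end Metric

theorem devaney_chaotic_sensitive_general (X : Type*) [MetricSpace X]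
    [Infinite X] (f : X → X) (hf : Continuous f)
    (htrans : ∀ U V : Set X, IsOpen U → IsOpen V → U.Nonempty → V.Nonempty →
      ∃ n : ℕ, (f^[n] '' U ∩ V).Nonempty)
    (hper : Dense {x : X | ∃ n : ℕ, 0 < n ∧ f^[n] x = x}) :
    ∃ ε > (0 : ℝ), ∀ x : X, ∀ δ > (0 : ℝ), ∃ y : X, dist x y < δ ∧
      ∃ t : ℕ, dist (f^[t] x) (f^[t] y) > ε := by
  obtain ⟨ε, hε, hfar⟩ := exists_forall_le_dist_iterate hper
  refine ⟨ε, hε, fun x δ hδ => ?_⟩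
  obtain ⟨p, hp⟩ := hfar x
  exact exists_lt_dist_iterate_of_forall_le_dist hf htrans hper hε hδ hp

/-- A Devaney-chaotic system (topologically transitive with dense periodic
points) on an infinite compact metric space is sensitive at every point. -/
theorem devaney_chaotic_sensitive (X : Type*) [MetricSpace X] [CompactSpace X]
    [Infinite X] (f : X → X) (hf : Continuous f)
    (htrans : ∀ U V : Set X, IsOpen U → IsOpen V → U.Nonempty → V.Nonempty →
      ∃ n : ℕ, (f^[n] '' U ∩ V).Nonempty)
    (hper : Dense {x : X | ∃ n : ℕ, 0 < n ∧ f^[n] x = x}) :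
    ∃ ε > (0 : ℝ), ∀ x : X, ∀ δ > (0 : ℝ), ∃ y : X, dist x y < δ ∧
      ∃ t : ℕ, dist (f^[t] x) (f^[t] y) > ε :=
  devaney_chaotic_sensitive_general X f hf htrans hper
end

section
/- Let f : X → X be a continuous map on a compact metric space with the shadowing property, and let U, V be clopen subsets. Then there exists an orbit from U to V (some x ∈ U and n ≥ 0 with f^n(x) ∈ V) if and only if for every δ > 0 there exists a finite δ-pseudo-orbit starting in U and ending in V. -/
/-! A pseudo-orbit from `U` to `V` fine enough to be shadowed within the thickness by which `U`
and `V` can be enlarged without leaving them is shadowed by a genuine orbit, which therefore starts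
in `U` and reaches `V`. Finite pseudo-orbits are shadowed by continuing them along the orbit of their
last point. -/

open Function Metric

theorem IsClopen.exists_pos_thickening_subset {X : Type*} [PseudoMetricSpace X] [CompactSpace X]
    {U : Set X} (hU : IsClopen U) : ∃ ε > (0 : ℝ), thickening ε U ⊆ U :=
  hU.isClosed.isCompact.exists_thickening_subset_open hU.isOpen subset_rfl

section PseudoOrbit

variable {X : Type*} (f : X → X)

theorem dist_iterate_succ_lt [PseudoMetricSpace X] (x : X) (n : ℕ) {δ : ℝ} (hδ : 0 < δ) :
    dist (f (f^[n] x)) (f^[n + 1] x) < δ := by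
  simpa [← iterate_succ_apply' f n x] using hδ

def extendByOrbit (x : ℕ → X) (k : ℕ) (n : ℕ) : X :=
  if n < k then x n else f^[n - k] (x k)

theorem extendByOrbit_of_le {x : ℕ → X} {k n : ℕ} (hn : n ≤ k) : extendByOrbit f x k n = x n := by
  rcases hn.lt_or_eq with hlt | rfl
  · simp [extendByOrbit, hlt]
  · simp [extendByOrbit]

variable [PseudoMetricSpace X]

theorem dist_extendByOrbit_lt {x : ℕ → X} {k : ℕ} {δ : ℝ} (hδ : 0 < δ)
    (hx : ∀ i < k, dist (f (x i)) (x (i + 1)) < δ) (n : ℕ) :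
    dist (f (extendByOrbit f x k n)) (extendByOrbit f x k (n + 1)) < δ := by
  by_cases hn : n < k
  · rw [extendByOrbit_of_le f hn.le, extendByOrbit_of_le f hn]
    exact hx n hn
  · have hsucc : n + 1 - k = n - k + 1 := by omega
    simpa [extendByOrbit, hn, show ¬n + 1 < k by omega, hsucc]
      using dist_iterate_succ_lt f (x k) (n - k) hδ

theorem exists_shadow_of_finite_pseudo_orbit
    (hshadow : ∀ ε > (0 : ℝ), ∃ δ > (0 : ℝ), ∀ x : ℕ → X,
      (∀ n : ℕ, dist (f (x n)) (x (n + 1)) < δ) →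
      ∃ y : X, ∀ n : ℕ, dist (f^[n] y) (x n) < ε)
    {ε : ℝ} (hε : 0 < ε) :
    ∃ δ > (0 : ℝ), ∀ (k : ℕ) (x : ℕ → X), (∀ i < k, dist (f (x i)) (x (i + 1)) < δ) →
      ∃ y : X, ∀ i ≤ k, dist (f^[i] y) (x i) < ε := by
  obtain ⟨δ, hδ, hshadowδ⟩ := hshadow ε hε
  refine ⟨δ, hδ, fun k x hx => ?_⟩
  obtain ⟨y, hy⟩ := hshadowδ _ (dist_extendByOrbit_lt f hδ hx)
  exact ⟨y, fun i hi => by simpa only [extendByOrbit_of_le f hi] using hy i⟩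

end PseudoOrbit

theorem orbit_iff_pseudo_orbits_general (X : Type*) [MetricSpace X] [CompactSpace X]
    (f : X → X)
    (hshadow : ∀ ε > (0 : ℝ), ∃ δ > (0 : ℝ), ∀ x : ℕ → X,
      (∀ n : ℕ, dist (f (x n)) (x (n + 1)) < δ) →
      ∃ y : X, ∀ n : ℕ, dist (f^[n] y) (x n) < ε)
    (U V : Set X) (hU : IsClopen U) (hV : IsClopen V) :
    (∃ x ∈ U, ∃ n : ℕ, f^[n] x ∈ V) ↔
      ∀ δ > (0 : ℝ), ∃ (k : ℕ) (x : ℕ → X), x 0 ∈ U ∧ x k ∈ V ∧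
        ∀ i < k, dist (f (x i)) (x (i + 1)) < δ := by
  constructor
  · rintro ⟨x, hx, n, hxn⟩ δ hδ
    exact ⟨n, fun i => f^[i] x, hx, hxn, fun i _ => dist_iterate_succ_lt f x i hδ⟩
  · intro h
    obtain ⟨εU, hεU, hUthick⟩ := hU.exists_pos_thickening_subset
    obtain ⟨εV, hεV, hVthick⟩ := hV.exists_pos_thickening_subset
    obtain ⟨δ, hδ, hfinite⟩ := exists_shadow_of_finite_pseudo_orbit f hshadow (lt_min hεU hεV)
    obtain ⟨k, x, hx0, hxk, hx⟩ := h δ hδ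
    obtain ⟨y, hy⟩ := hfinite k x hx
    refine ⟨y, hUthick ?_, k, hVthick ?_⟩
    · exact mem_thickening_iff.2 ⟨x 0, hx0, (hy 0 k.zero_le).trans_le (min_le_left _ _)⟩
    · exact mem_thickening_iff.2 ⟨x k, hxk, (hy k le_rfl).trans_le (min_le_right _ _)⟩

/-- For a system with the shadowing property and clopen sets `U`, `V`, there is
an orbit from `U` to `V` iff for every `δ > 0` there is a finite `δ`-pseudo-orbit
from `U` to `V`. -/
theorem orbit_iff_pseudo_orbits (X : Type*) [MetricSpace X] [CompactSpace X]
    (f : X → X) (hf : Continuous f)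
    (hshadow : ∀ ε > (0 : ℝ), ∃ δ > (0 : ℝ), ∀ x : ℕ → X,
      (∀ n : ℕ, dist (f (x n)) (x (n + 1)) < δ) →
      ∃ y : X, ∀ n : ℕ, dist (f^[n] y) (x n) < ε)
    (U V : Set X) (hU : IsClopen U) (hV : IsClopen V) :
    (∃ x ∈ U, ∃ n : ℕ, f^[n] x ∈ V) ↔
      ∀ δ > (0 : ℝ), ∃ (k : ℕ) (x : ℕ → X), x 0 ∈ U ∧ x k ∈ V ∧
        ∀ i < k, dist (f (x i)) (x (i + 1)) < δ :=
  orbit_iff_pseudo_orbits_general X f hshadow U V hU hV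
end
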